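/- Let ψ_e = Σ_{x ∈ {0,1}^d, |x| even} |x⟩ ∈ (ℂ²)^{⊗d} be the (unnormalized) sum of all computational basis vectors of even Hamming weight. Then ⟨ψ_e, ψ_e⟩ = 2^{d−1}, and for all 1 ≤ p < q ≤ 2d the expectation ⟨ψ_e, (−i) c_p c_q ψ_e⟩ equals 2^{d−1} if (p,q) = (2j, 2j+1) for some 1 ≤ j ≤ d−1 or (p,q) = (1, 2d), and equals 0 otherwise. Equivalently, the covariance matrix M with entries M_{p,q} = (−i/(2·⟨ψ_e,ψ_e⟩))⟨ψ_e, (c_p c_q − c_q c_p) ψ_e⟩ equals the standard antisymmetric matrix M_0 with (M_0)_{2j,2j+1} = 1 = −(M_0)_{2j+1,2j} for 1 ≤ j ≤ d−1, (M_0)_{1,2d} = 1 = −(M_0)_{2d,1}, and all other entries zero. -/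

import Mathlib

open Matrix

noncomputable def sigmaX : Matrix (Fin 2) (Fin 2) ℂ := !![0, 1; 1, 0]
noncomputable def sigmaY : Matrix (Fin 2) (Fin 2) ℂ := !![0, -Complex.I; Complex.I, 0]
noncomputable def sigmaZ : Matrix (Fin 2) (Fin 2) ℂ := !![1, 0; 0, -1]

/-- The single-site operator `σ` applied to qubit `k` (0-based) of a chain of `d` qubits,
i.e. the tensor product `1 ⊗ ⋯ ⊗ σ ⊗ ⋯ ⊗ 1` with `σ` in the `k`-th slot, written entrywise. -/
noncomputable def pauliAtN (d : ℕ) (σ : Matrix (Fin 2) (Fin 2) ℂ) (k : ℕ) :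
    Matrix (Fin d → Fin 2) (Fin d → Fin 2) ℂ :=
  fun x y => ∏ i : Fin d, if (i : ℕ) = k then σ (x i) (y i) else (if x i = y i then 1 else 0)

/-- Jordan–Wigner Majorana operator `c_p` (`p` is 1-based):
`c_{2j-1} = Z_1 ⋯ Z_{j-1} X_j` and `c_{2j} = Z_1 ⋯ Z_{j-1} Y_j`. -/
noncomputable def majorana (d : ℕ) (p : ℕ) : Matrix (Fin d → Fin 2) (Fin d → Fin 2) ℂ :=
  (((List.range ((p + 1) / 2 - 1)).map (fun k => pauliAtN d sigmaZ k)).prod) *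
    pauliAtN d (if p % 2 = 1 then sigmaX else sigmaY) ((p + 1) / 2 - 1)

/-- The standard Hermitian inner product on the `d`-qubit space. -/
noncomputable def qinner {d : ℕ} (φ ψ : (Fin d → Fin 2) → ℂ) : ℂ := ∑ x, star (φ x) * ψ x

/-- The unnormalized even state `ψ_e = ∑_{|x| even} |x⟩` on `d` qubits. -/
noncomputable def psiE (d : ℕ) : (Fin d → Fin 2) → ℂ :=
  fun x => if Even (∑ i, (x i : ℕ)) then 1 else 0

/-- The standard antisymmetric matrix `M₀` (1-based indices `p, q ∈ {1,…,2d}`), with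
`(M₀)_{2j,2j+1} = 1 = −(M₀)_{2j+1,2j}` for `1 ≤ j ≤ d−1`, `(M₀)_{1,2d} = 1 = −(M₀)_{2d,1}`,
and all other entries zero. -/
noncomputable def M0ent (d : ℕ) (p q : ℕ) : ℂ :=
  if p % 2 = 0 ∧ q = p + 1 then 1
  else if q % 2 = 0 ∧ p = q + 1 then -1
  else if p = 1 ∧ q = 2 * d then 1
  else if q = 1 ∧ p = 2 * d then -1
  else 0

section AuxJW
open Finset

def flipAt {d : ℕ} (j : Fin d) (x : Fin d → Fin 2) : Fin d → Fin 2 :=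
  Function.update x j (1 - x j)

noncomputable def zphase (d m : ℕ) (x : Fin d → Fin 2) : ℂ :=
  ∏ i : Fin d, if (i : ℕ) < m then (-1 : ℂ) ^ ((x i : ℕ)) else 1

noncomputable def mval (p : ℕ) (a : Fin 2) : ℂ :=
  if p % 2 = 1 then 1 else (if a = 0 then -Complex.I else Complex.I)

lemma flipAt_apply_self {d : ℕ} (j : Fin d) (x : Fin d → Fin 2) :
    flipAt j x j = 1 - x j := by simp [flipAt]

lemma flipAt_apply_ne {d : ℕ} (j i : Fin d) (x : Fin d → Fin 2) (h : i ≠ j) :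
    flipAt j x i = x i := by simp [flipAt, Function.update_of_ne h]

lemma flipAt_flipAt {d : ℕ} (j : Fin d) (x : Fin d → Fin 2) :
    flipAt j (flipAt j x) = x := by
  funext i
  by_cases h : i = j
  · subst h
    rw [flipAt_apply_self, flipAt_apply_self]
    rcases (by decide : ∀ b : Fin 2, 1 - (1 - b) = b) (x i) with h
    exact h
  · rw [flipAt_apply_ne _ _ _ h, flipAt_apply_ne _ _ _ h]

lemma flipAt_comm {d : ℕ} (j k : Fin d) (h : j ≠ k) (x : Fin d → Fin 2) :
    flipAt j (flipAt k x) = flipAt k (flipAt j x) := by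
  funext i
  by_cases hj : i = j
  · subst hj
    rw [flipAt_apply_self, flipAt_apply_ne _ _ _ h, flipAt_apply_ne _ _ _ h, flipAt_apply_self]
  · by_cases hk : i = k
    · subst hk
      rw [flipAt_apply_ne _ _ _ hj, flipAt_apply_self, flipAt_apply_self,
        flipAt_apply_ne _ _ _ hj]
    · rw [flipAt_apply_ne _ _ _ hj, flipAt_apply_ne _ _ _ hk, flipAt_apply_ne _ _ _ hk,
        flipAt_apply_ne _ _ _ hj]

lemma sum_flipAt_parity {d : ℕ} (j : Fin d) (x : Fin d → Fin 2) :
    Even (∑ i, ((flipAt j x i : ℕ))) ↔ ¬ Even (∑ i, ((x i : ℕ))) := by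
  have h1 : ∑ i, ((flipAt j x i : ℕ)) =
      ((1 - x j : Fin 2) : ℕ) + ∑ i ∈ univ.erase j, ((x i : ℕ)) := by
    rw [← Finset.add_sum_erase _ _ (Finset.mem_univ j)]
    congr 1
    · rw [flipAt_apply_self]
    · exact Finset.sum_congr rfl fun i hi =>
        by rw [flipAt_apply_ne _ _ _ (Finset.ne_of_mem_erase hi)]
  have h2 : ∑ i, ((x i : ℕ)) = ((x j : ℕ)) + ∑ i ∈ univ.erase j, ((x i : ℕ)) :=
    (Finset.add_sum_erase _ _ (Finset.mem_univ j)).symm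
  have h3 : ((1 - x j : Fin 2) : ℕ) + ((x j : ℕ)) = 1 := by
    rcases (by decide : ∀ b : Fin 2, ((1 - b : Fin 2) : ℕ) + (b : ℕ) = 1) (x j) with h
    exact h
  rw [h1, h2, Nat.even_iff, Nat.even_iff]
  omega

lemma neg_one_pow_sq (n : ℕ) : ((-1 : ℂ) ^ n) * ((-1 : ℂ) ^ n) = 1 := by
  rw [← mul_pow]; norm_num

lemma zphase_mul_zphase {d : ℕ} (a b : ℕ) (hab : a ≤ b) (x : Fin d → Fin 2) :
    zphase d a x * zphase d b x =
      ∏ i ∈ univ.filter (fun i : Fin d => a ≤ (i : ℕ) ∧ (i : ℕ) < b), (-1 : ℂ) ^ ((x i : ℕ)) := by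
  rw [zphase, zphase, Finset.prod_filter, ← Finset.prod_mul_distrib]
  refine Finset.prod_congr rfl fun i _ => ?_
  by_cases h1 : (i : ℕ) < a
  · rw [if_pos h1, if_pos (lt_of_lt_of_le h1 hab), if_neg (by omega), neg_one_pow_sq]
  · by_cases h2 : (i : ℕ) < b
    · rw [if_neg h1, if_pos h2, if_pos (by omega), one_mul]
    · rw [if_neg h1, if_neg h2, if_neg (by omega), one_mul]

lemma zphase_mul_self {d : ℕ} (a : ℕ) (x : Fin d → Fin 2) :
    zphase d a x * zphase d a x = 1 := by
  rw [zphase_mul_zphase a a le_rfl]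
  rw [Finset.filter_false_of_mem (fun i _ => by omega), Finset.prod_empty]

lemma zphase_flipAt_ge {d : ℕ} (m : ℕ) (k : Fin d) (hk : m ≤ (k : ℕ)) (x : Fin d → Fin 2) :
    zphase d m (flipAt k x) = zphase d m x := by
  refine Finset.prod_congr rfl fun i _ => ?_
  by_cases h : (i : ℕ) < m
  · rw [if_pos h, if_pos h, flipAt_apply_ne _ _ _ (fun he => by subst he; omega)]
  · rw [if_neg h, if_neg h]

lemma zphase_flipAt_lt {d : ℕ} (m : ℕ) (k : Fin d) (hk : (k : ℕ) < m) (x : Fin d → Fin 2) :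
    zphase d m (flipAt k x) = - zphase d m x := by
  rw [zphase, zphase, ← Finset.prod_mul_prod_compl {k}
    (fun i => if (i : ℕ) < m then (-1 : ℂ) ^ (((flipAt k x) i : ℕ)) else 1),
    ← Finset.prod_mul_prod_compl {k} (fun i => if (i : ℕ) < m then (-1 : ℂ) ^ ((x i : ℕ)) else 1)]
  have h2 : ∀ i ∈ ({k} : Finset (Fin d))ᶜ,
      (if (i : ℕ) < m then (-1 : ℂ) ^ (((flipAt k x) i : ℕ)) else 1) =
      (if (i : ℕ) < m then (-1 : ℂ) ^ ((x i : ℕ)) else 1) := by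
    intro i hi
    rw [flipAt_apply_ne _ _ _ (by simpa using hi)]
  rw [Finset.prod_congr rfl h2, Finset.prod_singleton, Finset.prod_singleton,
    if_pos hk, if_pos hk, flipAt_apply_self]
  have : ((-1 : ℂ)) ^ (((1 - x k : Fin 2) : ℕ)) = -((-1 : ℂ) ^ ((x k : ℕ))) := by
    rcases (by decide : ∀ b : Fin 2, ((1 - b : Fin 2) : ℕ) = 1 - (b : ℕ) ∧ ((b:ℕ) = 0 ∨ (b:ℕ) = 1)) (x k) with ⟨h1, h0 | h0⟩ <;> rw [h1, h0] <;> norm_num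
  rw [this]
  ring

lemma fin2_ne (a b : Fin 2) (h : b ≠ a) : b = 1 - a := by revert h; revert a b; decide

lemma sigmaZ_apply (a b : Fin 2) :
    sigmaZ a b = if a = b then (-1 : ℂ) ^ ((a : ℕ)) else 0 := by
  fin_cases a <;> fin_cases b <;> simp [sigmaZ]

lemma sigmaXY_diag (p : ℕ) (a : Fin 2) : (if p % 2 = 1 then sigmaX else sigmaY) a a = 0 := by
  by_cases h : p % 2 = 1
  · rw [if_pos h]; fin_cases a <;> simp [sigmaX]
  · rw [if_neg h]; fin_cases a <;> simp [sigmaY]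

lemma sigmaXY_offdiag (p : ℕ) (a : Fin 2) :
    (if p % 2 = 1 then sigmaX else sigmaY) a (1 - a) = mval p a := by
  by_cases h : p % 2 = 1
  · rw [if_pos h, mval, if_pos h]; fin_cases a <;> simp [sigmaX]
  · rw [if_neg h, mval, if_neg h]; fin_cases a <;> simp [sigmaY]

lemma pauliZ_mulVec {d : ℕ} (j : Fin d) (v : (Fin d → Fin 2) → ℂ) :
    (pauliAtN d sigmaZ (j : ℕ)).mulVec v = fun x => (-1 : ℂ) ^ ((x j : ℕ)) * v x := by
  funext x
  simp only [Matrix.mulVec, dotProduct, pauliAtN]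
  rw [Finset.sum_eq_single x]
  · congr 1
    rw [Finset.prod_eq_single_of_mem j (Finset.mem_univ j)]
    · rw [if_pos rfl, sigmaZ_apply, if_pos rfl]
    · intro i _ hij
      rw [if_neg (by simpa [Fin.val_eq_val] using hij), if_pos rfl]
  · intro y _ hyx
    obtain ⟨i, hi⟩ := Function.ne_iff.mp hyx
    refine mul_eq_zero_of_left (Finset.prod_eq_zero (Finset.mem_univ i) ?_) _
    by_cases hij : (i : ℕ) = (j : ℕ)
    · rw [if_pos hij, sigmaZ_apply, if_neg (Ne.symm hi)]
    · rw [if_neg hij, if_neg (Ne.symm hi)]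
  · intro h; exact absurd (Finset.mem_univ x) h

lemma pauliXY_mulVec {d : ℕ} (σ : Matrix (Fin 2) (Fin 2) ℂ) (hdiag : ∀ a, σ a a = 0)
    (j : Fin d) (v : (Fin d → Fin 2) → ℂ) :
    (pauliAtN d σ (j : ℕ)).mulVec v = fun x => σ (x j) (1 - x j) * v (flipAt j x) := by
  funext x
  simp only [Matrix.mulVec, dotProduct, pauliAtN]
  rw [Finset.sum_eq_single (flipAt j x)]
  · congr 1
    rw [Finset.prod_eq_single_of_mem j (Finset.mem_univ j)]
    · rw [if_pos rfl, flipAt_apply_self]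
    · intro i _ hij
      rw [if_neg (by simpa [Fin.val_eq_val] using hij), flipAt_apply_ne _ _ _ hij, if_pos rfl]
  · intro y _ hyx
    refine mul_eq_zero_of_left ?_ _
    by_cases hyj : y j = x j
    · refine Finset.prod_eq_zero (Finset.mem_univ j) ?_
      rw [if_pos rfl, hyj, hdiag]
    · obtain ⟨i, hi⟩ := Function.ne_iff.mp hyx
      have hij : i ≠ j := by
        intro he; subst he
        exact hi (by rw [flipAt_apply_self, fin2_ne _ _ hyj])
      refine Finset.prod_eq_zero (Finset.mem_univ i) ?_
      rw [if_neg (by simpa [Fin.val_eq_val] using hij)]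
      rw [flipAt_apply_ne _ _ _ hij] at hi
      rw [if_neg (Ne.symm hi)]
  · intro h; exact absurd (Finset.mem_univ (flipAt j x)) h

lemma zphase_succ {d m : ℕ} (j : Fin d) (hj : (j : ℕ) = m) (x : Fin d → Fin 2) :
    zphase d (m + 1) x = zphase d m x * (-1 : ℂ) ^ ((x j : ℕ)) := by
  have h1 := zphase_mul_zphase (d := d) m (m + 1) (Nat.le_succ m) x
  have h2 : univ.filter (fun i : Fin d => m ≤ (i : ℕ) ∧ (i : ℕ) < m + 1) = {j} := by
    ext i
    simp only [Finset.mem_filter, Finset.mem_univ, true_and, Finset.mem_singleton, Fin.ext_iff]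
    omega
  rw [h2, Finset.prod_singleton] at h1
  calc zphase d (m + 1) x = (zphase d m x * zphase d m x) * zphase d (m + 1) x := by
        rw [zphase_mul_self, one_mul]
    _ = zphase d m x * (-1 : ℂ) ^ ((x j : ℕ)) := by rw [mul_assoc, h1]

lemma zstring_mulVec (d m : ℕ) (hm : m ≤ d) (v : (Fin d → Fin 2) → ℂ) :
    (((List.range m).map (fun k => pauliAtN d sigmaZ k)).prod).mulVec v
      = fun x => zphase d m x * v x := by
  revert v
  induction m with
  | zero =>
    intro v
    funext x
    simp [zphase, Matrix.one_mulVec]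
  | succ m ih =>
    intro v
    have hm' : m ≤ d := by omega
    have hjd : m < d := by omega
    rw [List.range_succ, List.map_append, List.prod_append, List.map_singleton,
      List.prod_singleton, ← Matrix.mulVec_mulVec]
    have hz : pauliAtN d sigmaZ m = pauliAtN d sigmaZ (((⟨m, hjd⟩ : Fin d) : ℕ)) := rfl
    rw [hz, pauliZ_mulVec, ih hm']
    funext x
    rw [zphase_succ (⟨m, hjd⟩ : Fin d) rfl]
    ring

lemma majorana_mulVec (d p : ℕ) (j : Fin d)
    (hj : (j : ℕ) = (p + 1) / 2 - 1) (v : (Fin d → Fin 2) → ℂ) :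
    (majorana d p).mulVec v
      = fun x => zphase d ((j : ℕ)) x * (mval p (x j) * v (flipAt j x)) := by
  rw [majorana, show (p + 1) / 2 - 1 = (j : ℕ) from hj.symm, ← Matrix.mulVec_mulVec,
    pauliXY_mulVec _ (sigmaXY_diag p) j, zstring_mulVec d _ (le_of_lt j.isLt)]
  funext x
  simp only [sigmaXY_offdiag]

lemma sum_prod_neg_one (d : ℕ) (T : Finset (Fin d)) :
    ∑ x : Fin d → Fin 2, ∏ i ∈ T, (-1 : ℂ) ^ ((x i : ℕ))
      = if T = ∅ then (2 : ℂ) ^ d else 0 := by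
  have h1 : ∀ x : Fin d → Fin 2, ∏ i ∈ T, (-1 : ℂ) ^ ((x i : ℕ))
      = ∏ i : Fin d, (if i ∈ T then (-1 : ℂ) ^ ((x i : ℕ)) else 1) := by
    intro x
    rw [← Finset.prod_filter, Finset.filter_mem_eq_inter, Finset.univ_inter]
  have h3 := Finset.prod_univ_sum (fun _ : Fin d => (univ : Finset (Fin 2)))
    (fun i b => if i ∈ T then (-1 : ℂ) ^ ((b : ℕ)) else 1)
  rw [Fintype.piFinset_univ] at h3
  rw [Finset.sum_congr rfl fun x _ => h1 x, ← h3]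
  have h2 : ∀ i : Fin d, (∑ b : Fin 2, if i ∈ T then ((-1 : ℂ)) ^ ((b : ℕ)) else 1)
      = if i ∈ T then 0 else 2 := by
    intro i
    by_cases h : i ∈ T <;> simp [h, Fin.sum_univ_two] <;> norm_num
  rw [Finset.prod_congr rfl fun i _ => h2 i]
  by_cases hT : T = ∅
  · rw [if_pos hT]
    subst hT
    simp [Finset.prod_const]
  · rw [if_neg hT]
    obtain ⟨i, hi⟩ := Finset.nonempty_iff_ne_empty.mpr hT
    exact Finset.prod_eq_zero (Finset.mem_univ i) (if_pos hi)

lemma signSum (d : ℕ) (hd : 1 ≤ d) (S : Finset (Fin d)) :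
    ∑ x : Fin d → Fin 2,
        (if Even (∑ i, ((x i : ℕ))) then (1 : ℂ) else 0) * ∏ i ∈ S, (-1 : ℂ) ^ ((x i : ℕ))
      = if S = ∅ ∨ S = univ then (2 : ℂ) ^ (d - 1) else 0 := by
  have key : (2 : ℂ) * ∑ x : Fin d → Fin 2,
        (if Even (∑ i, ((x i : ℕ))) then (1 : ℂ) else 0) * ∏ i ∈ S, (-1 : ℂ) ^ ((x i : ℕ))
      = (if S = ∅ then (2 : ℂ) ^ d else 0) + (if Sᶜ = ∅ then (2 : ℂ) ^ d else 0) := by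
    rw [Finset.mul_sum, ← sum_prod_neg_one d S, ← sum_prod_neg_one d Sᶜ,
      ← Finset.sum_add_distrib]
    refine Finset.sum_congr rfl fun x _ => ?_
    have hS2 : (∏ i ∈ S, (-1 : ℂ) ^ ((x i : ℕ))) * (∏ i ∈ S, (-1 : ℂ) ^ ((x i : ℕ))) = 1 := by
      rw [← Finset.prod_mul_distrib]
      exact Finset.prod_eq_one fun i _ => neg_one_pow_sq _
    have hKey : ∏ i ∈ Sᶜ, (-1 : ℂ) ^ ((x i : ℕ))
        = (∏ i ∈ S, (-1 : ℂ) ^ ((x i : ℕ))) * (-1 : ℂ) ^ (∑ i, ((x i : ℕ))) := by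
      calc ∏ i ∈ Sᶜ, (-1 : ℂ) ^ ((x i : ℕ))
          = ((∏ i ∈ S, (-1 : ℂ) ^ ((x i : ℕ))) * ∏ i ∈ S, (-1 : ℂ) ^ ((x i : ℕ)))
            * ∏ i ∈ Sᶜ, (-1 : ℂ) ^ ((x i : ℕ)) := by rw [hS2, one_mul]
        _ = (∏ i ∈ S, (-1 : ℂ) ^ ((x i : ℕ))) * (-1 : ℂ) ^ (∑ i, ((x i : ℕ))) := by
            rw [mul_assoc, Finset.prod_mul_prod_compl]
            congr 1
            exact Finset.prod_pow_eq_pow_sum univ _ _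
    rw [hKey]
    rcases Nat.even_or_odd (∑ i, ((x i : ℕ))) with he | ho
    · rw [if_pos he, he.neg_one_pow]
      ring
    · rw [if_neg (Nat.not_even_iff_odd.mpr ho), ho.neg_one_pow]
      ring
  have huniv_ne : (univ : Finset (Fin d)) ≠ ∅ :=
    Finset.nonempty_iff_ne_empty.mp ⟨⟨0, hd⟩, Finset.mem_univ _⟩
  have h2d : (2 : ℂ) ^ d = 2 * 2 ^ (d - 1) := by
    rw [← pow_succ']
    congr 1
    omega
  refine mul_left_cancel₀ (two_ne_zero) ?_
  rw [key]
  by_cases h1 : S = ∅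
  · have hne : ¬ (Sᶜ = ∅) := by
      rw [Finset.compl_eq_empty_iff, h1]
      exact fun hc => huniv_ne hc.symm
    rw [if_pos h1, if_neg hne, if_pos (Or.inl h1), add_zero, h2d]
  · by_cases h2 : S = univ
    · rw [if_neg h1, if_pos (by simp [h2]), if_pos (Or.inr h2), zero_add, h2d]
    · rw [if_neg h1, if_neg (by simp [Finset.compl_eq_empty_iff, h2]),
        if_neg (by tauto), add_zero, mul_zero]

lemma Epq (d p q : ℕ) (hd : 1 ≤ d) (hp : 1 ≤ p) (hpq : p < q) (hq : q ≤ 2 * d) :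
    qinner (psiE d) ((majorana d p * majorana d q).mulVec (psiE d)) =
      if (∃ j ∈ Finset.Icc 1 (d - 1), p = 2 * j ∧ q = 2 * j + 1) ∨ (p = 1 ∧ q = 2 * d)
        then Complex.I * (2 : ℂ) ^ (d - 1) else 0 := by
  have hkp : (p + 1) / 2 - 1 < d := by omega
  have hkq : (q + 1) / 2 - 1 < d := by omega
  set jp : Fin d := ⟨(p + 1) / 2 - 1, hkp⟩ with hjp_def
  set jq : Fin d := ⟨(q + 1) / 2 - 1, hkq⟩ with hjq_def
  have hvp : (jp : ℕ) = (p + 1) / 2 - 1 := rfl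
  have hvq : (jq : ℕ) = (q + 1) / 2 - 1 := rfl
  have hstar : ∀ y, star (psiE d y) = psiE d y := by
    intro y; simp only [psiE]; split <;> simp
  have hmval1 : ∀ r : ℕ, r % 2 = 1 → ∀ a : Fin 2, mval r a = 1 := by
    intro r h a; rw [mval, if_pos h]
  have hmval0 : ∀ r : ℕ, ¬ (r % 2 = 1) → ∀ a : Fin 2,
      mval r a = -Complex.I * (-1 : ℂ) ^ ((a : ℕ)) := by
    intro r h a; rw [mval, if_neg h]; fin_cases a <;> norm_num
  have hmval0' : ∀ a : Fin 2, ¬ (q % 2 = 1) →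
      mval q (1 - a) = Complex.I * (-1 : ℂ) ^ ((a : ℕ)) := by
    intro a h; rw [mval, if_neg h]; fin_cases a <;> norm_num
  rw [← Matrix.mulVec_mulVec, majorana_mulVec d q jq rfl, majorana_mulVec d p jp rfl]
  rcases eq_or_lt_of_le (show (jp : ℕ) ≤ (jq : ℕ) by omega) with heq | hlt
  · -- same site: q = p + 1, p odd
    have hq1 : q = p + 1 := by omega
    have hp1 : p % 2 = 1 := by omega
    have hq2 : ¬ (q % 2 = 1) := by omega
    have hjj : jq = jp := by rw [hjp_def, hjq_def]; exact Fin.ext heq.symm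
    have main : qinner (psiE d)
        (fun x => zphase d ((jp : ℕ)) x * (mval p (x jp) *
          ((fun x => zphase d ((jq : ℕ)) x * (mval q (x jq) * psiE d (flipAt jq x)))
            (flipAt jp x))))
        = Complex.I * (if ({jp} : Finset (Fin d)) = ∅ ∨ ({jp} : Finset (Fin d)) = univ
            then (2 : ℂ) ^ (d - 1) else 0) := by
      rw [← signSum d hd {jp}, qinner, Finset.mul_sum]
      refine Finset.sum_congr rfl fun x _ => ?_
      rw [hstar]
      simp only [hjj, flipAt_flipAt, flipAt_apply_self]
      rw [zphase_flipAt_ge ((p + 1) / 2 - 1) jp (by omega), hmval1 p hp1,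
        hmval0' (x jp) hq2, Finset.prod_singleton,
        hvp]
      simp only [psiE]
      split_ifs with hev
      · linear_combination (Complex.I * (-1 : ℂ) ^ ((x jp : ℕ)))
          * zphase_mul_self ((p + 1) / 2 - 1) x
      · ring
    rw [main]
    by_cases hd1 : d = 1
    · have huniv : ({jp} : Finset (Fin d)) = univ := by
        subst hd1
        ext i
        simp only [Finset.mem_singleton, Finset.mem_univ, iff_true, Fin.ext_iff]
        omega
      rw [if_pos (Or.inr huniv), if_pos (Or.inr ⟨by omega, by omega⟩)]
    · have hnotuniv : ¬ (({jp} : Finset (Fin d)) = ∅ ∨ ({jp} : Finset (Fin d)) = univ) := by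
        rintro (h | h)
        · exact absurd h (Finset.singleton_ne_empty jp)
        · have := Finset.card_univ (α := Fin d)
          rw [← h, Finset.card_singleton, Fintype.card_fin] at this
          omega
      have hC : ¬ ((∃ j ∈ Finset.Icc 1 (d - 1), p = 2 * j ∧ q = 2 * j + 1) ∨
          (p = 1 ∧ q = 2 * d)) := by
        rintro (⟨j, hj, h1, h2⟩ | ⟨h1, h2⟩)
        · omega
        · omega
      rw [if_neg hnotuniv, mul_zero, if_neg hC]
  · -- distinct sites: jp < jq
    have hne : jq ≠ jp := by
      intro h
      have := congrArg Fin.val h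
      omega
    have hpar : ∀ x : Fin d → Fin 2,
        Even (∑ i, (((flipAt jq (flipAt jp x)) i : ℕ))) ↔ Even (∑ i, ((x i : ℕ))) := by
      intro x; rw [sum_flipAt_parity, sum_flipAt_parity, not_not]
    have hPZ : ∀ x : Fin d → Fin 2, zphase d ((jp : ℕ)) x * zphase d ((jq : ℕ)) x
        = ∏ i ∈ univ.filter (fun i : Fin d => (jp : ℕ) ≤ (i : ℕ) ∧ (i : ℕ) < (jq : ℕ)),
            (-1 : ℂ) ^ ((x i : ℕ)) :=
      fun x => zphase_mul_zphase _ _ (le_of_lt hlt) x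
    set A : Finset (Fin d) :=
      univ.filter (fun i : Fin d => (jp : ℕ) ≤ (i : ℕ) ∧ (i : ℕ) < (jq : ℕ)) with hA_def
    set S2 : Finset (Fin d) :=
      univ.filter (fun i : Fin d => (jp : ℕ) ≤ (i : ℕ) ∧ (i : ℕ) ≤ (jq : ℕ)) with hS2_def
    set S3 : Finset (Fin d) :=
      univ.filter (fun i : Fin d => (jp : ℕ) < (i : ℕ) ∧ (i : ℕ) < (jq : ℕ)) with hS3_def
    set S4 : Finset (Fin d) :=
      univ.filter (fun i : Fin d => (jp : ℕ) < (i : ℕ) ∧ (i : ℕ) ≤ (jq : ℕ)) with hS4_def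
    have hjqA : jq ∉ A := by simp [hA_def]
    have hjpS3 : jp ∉ S3 := by simp [hS3_def]
    have hjqS3 : jq ∉ S3 := by simp [hS3_def]
    have hjpA : jp ∈ A := by simp [hA_def]; omega
    have hjqS2 : jq ∈ S2 := by simp [hS2_def]; omega
    have hjqS4 : jq ∈ S4 := by simp [hS4_def]; omega
    have hjpS4 : jp ∉ S4 := by simp [hS4_def]
    have h24 : S2 = insert jq A := by
      ext i
      simp only [hS2_def, hA_def, Finset.mem_filter, Finset.mem_univ, true_and,
        Finset.mem_insert, Fin.ext_iff]
      omega
    have hA3 : A = insert jp S3 := by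
      ext i
      simp only [hS3_def, hA_def, Finset.mem_filter, Finset.mem_univ, true_and,
        Finset.mem_insert, Fin.ext_iff]
      omega
    have h44 : S4 = insert jq S3 := by
      ext i
      simp only [hS3_def, hS4_def, Finset.mem_filter, Finset.mem_univ, true_and,
        Finset.mem_insert, Fin.ext_iff]
      omega
    -- generic per-x reductions done in each parity case below
    by_cases hp2 : p % 2 = 1 <;> by_cases hq2 : q % 2 = 1
    · -- (1) p odd, q odd : zero
      have main : qinner (psiE d)
          (fun x => zphase d ((jp : ℕ)) x * (mval p (x jp) *
            ((fun x => zphase d ((jq : ℕ)) x * (mval q (x jq) * psiE d (flipAt jq x)))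
              (flipAt jp x))))
          = (-1 : ℂ) * (if A = ∅ ∨ A = univ then (2 : ℂ) ^ (d - 1) else 0) := by
        rw [← signSum d hd A, qinner, Finset.mul_sum]
        refine Finset.sum_congr rfl fun x _ => ?_
        rw [hstar]
        simp only [psiE, hpar, flipAt_apply_ne jp jq _ hne, hmval1 p hp2, hmval1 q hq2,
          zphase_flipAt_lt _ jp hlt]
        split_ifs with hev
        · linear_combination (-1 : ℂ) * hPZ x
        · ring
      have hC : ¬ ((∃ j ∈ Finset.Icc 1 (d - 1), p = 2 * j ∧ q = 2 * j + 1) ∨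
          (p = 1 ∧ q = 2 * d)) := by
        rintro (⟨j, hj, h1, h2⟩ | ⟨h1, h2⟩) <;> omega
      have hnott : ¬ (A = ∅ ∨ A = univ) := by
        rintro (h | h)
        · rw [h] at hjpA; exact absurd hjpA (Finset.notMem_empty _)
        · rw [h] at hjqA; exact hjqA (Finset.mem_univ _)
      rw [main, if_neg hnott, if_neg hC, mul_zero]
    · -- (2) p odd, q even
      have main : qinner (psiE d)
          (fun x => zphase d ((jp : ℕ)) x * (mval p (x jp) *
            ((fun x => zphase d ((jq : ℕ)) x * (mval q (x jq) * psiE d (flipAt jq x)))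
              (flipAt jp x))))
          = Complex.I * (if S2 = ∅ ∨ S2 = univ then (2 : ℂ) ^ (d - 1) else 0) := by
        rw [← signSum d hd S2, qinner, Finset.mul_sum]
        refine Finset.sum_congr rfl fun x _ => ?_
        rw [hstar]
        simp only [psiE, hpar, flipAt_apply_ne jp jq _ hne, hmval1 p hp2, hmval0 q hq2,
          zphase_flipAt_lt _ jp hlt]
        rw [h24, Finset.prod_insert hjqA]
        split_ifs with hev
        · linear_combination (Complex.I * (-1 : ℂ) ^ ((x jq : ℕ))) * hPZ x
        · ring
      rw [main]
      by_cases hps : (jp : ℕ) = 0 ∧ (jq : ℕ) = d - 1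
      · have hS2univ : S2 = univ := by
          rw [Finset.eq_univ_iff_forall]
          intro i
          simp only [hS2_def, Finset.mem_filter, Finset.mem_univ, true_and]
          have := i.isLt
          omega
        rw [if_pos (Or.inr hS2univ), if_pos (Or.inr ⟨by omega, by omega⟩)]
      · have hS2ne : ¬ (S2 = ∅ ∨ S2 = univ) := by
          rintro (h | h)
          · rw [h] at hjqS2; exact absurd hjqS2 (Finset.notMem_empty _)
          · refine hps ?_
            have h0 : (⟨0, by omega⟩ : Fin d) ∈ S2 := h ▸ Finset.mem_univ _
            have h1 : (⟨d - 1, by omega⟩ : Fin d) ∈ S2 := h ▸ Finset.mem_univ _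
            simp only [hS2_def, Finset.mem_filter, Finset.mem_univ, true_and] at h0 h1
            omega
        have hC : ¬ ((∃ j ∈ Finset.Icc 1 (d - 1), p = 2 * j ∧ q = 2 * j + 1) ∨
            (p = 1 ∧ q = 2 * d)) := by
          rintro (⟨j, hj, h1, h2⟩ | ⟨h1, h2⟩)
          · omega
          · exact hps ⟨by omega, by omega⟩
        rw [if_neg hS2ne, if_neg hC, mul_zero]
    · -- (3) p even, q odd
      have main : qinner (psiE d)
          (fun x => zphase d ((jp : ℕ)) x * (mval p (x jp) *
            ((fun x => zphase d ((jq : ℕ)) x * (mval q (x jq) * psiE d (flipAt jq x)))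
              (flipAt jp x))))
          = Complex.I * (if S3 = ∅ ∨ S3 = univ then (2 : ℂ) ^ (d - 1) else 0) := by
        rw [← signSum d hd S3, qinner, Finset.mul_sum]
        refine Finset.sum_congr rfl fun x _ => ?_
        rw [hstar]
        simp only [psiE, hpar, flipAt_apply_ne jp jq _ hne, hmval0 p hp2, hmval1 q hq2,
          zphase_flipAt_lt _ jp hlt]
        have hP3 : (∏ i ∈ A, (-1 : ℂ) ^ ((x i : ℕ)))
            = (-1 : ℂ) ^ ((x jp : ℕ)) * ∏ i ∈ S3, (-1 : ℂ) ^ ((x i : ℕ)) := by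
          rw [hA3, Finset.prod_insert hjpS3]
        split_ifs with hev
        · linear_combination (Complex.I * (-1 : ℂ) ^ ((x jp : ℕ))) * hPZ x
            + Complex.I * (-1 : ℂ) ^ ((x jp : ℕ)) * hP3
            + (Complex.I * ∏ i ∈ S3, (-1 : ℂ) ^ ((x i : ℕ))) * neg_one_pow_sq ((x jp : ℕ))
        · ring
      rw [main]
      by_cases hsp : (jq : ℕ) = (jp : ℕ) + 1
      · have hS3e : S3 = ∅ := by
          rw [Finset.eq_empty_iff_forall_notMem]
          intro i hi
          simp only [hS3_def, Finset.mem_filter, Finset.mem_univ, true_and] at hi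
          omega
        rw [if_pos (Or.inl hS3e),
          if_pos (Or.inl ⟨p / 2, Finset.mem_Icc.mpr ⟨by omega, by omega⟩, by omega, by omega⟩)]
      · have hS3ne : ¬ (S3 = ∅ ∨ S3 = univ) := by
          rintro (h | h)
          · have hmem : (⟨(jp : ℕ) + 1, by omega⟩ : Fin d) ∈ S3 := by
              simp only [hS3_def, Finset.mem_filter, Finset.mem_univ, true_and]
              omega
            rw [h] at hmem; exact absurd hmem (Finset.notMem_empty _)
          · rw [h] at hjpS3; exact hjpS3 (Finset.mem_univ _)
        have hC : ¬ ((∃ j ∈ Finset.Icc 1 (d - 1), p = 2 * j ∧ q = 2 * j + 1) ∨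
            (p = 1 ∧ q = 2 * d)) := by
          rintro (⟨j, hj, h1, h2⟩ | ⟨h1, h2⟩) <;> omega
        rw [if_neg hS3ne, if_neg hC, mul_zero]
    · -- (4) p even, q even : zero
      have main : qinner (psiE d)
          (fun x => zphase d ((jp : ℕ)) x * (mval p (x jp) *
            ((fun x => zphase d ((jq : ℕ)) x * (mval q (x jq) * psiE d (flipAt jq x)))
              (flipAt jp x))))
          = (1 : ℂ) * (if S4 = ∅ ∨ S4 = univ then (2 : ℂ) ^ (d - 1) else 0) := by
        rw [← signSum d hd S4, qinner, Finset.mul_sum]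
        refine Finset.sum_congr rfl fun x _ => ?_
        rw [hstar]
        simp only [psiE, hpar, flipAt_apply_ne jp jq _ hne, hmval0 p hp2, hmval0 q hq2,
          zphase_flipAt_lt _ jp hlt]
        have hP3 : (∏ i ∈ A, (-1 : ℂ) ^ ((x i : ℕ)))
            = (-1 : ℂ) ^ ((x jp : ℕ)) * ∏ i ∈ S3, (-1 : ℂ) ^ ((x i : ℕ)) := by
          rw [hA3, Finset.prod_insert hjpS3]
        have hP4 : (∏ i ∈ S4, (-1 : ℂ) ^ ((x i : ℕ)))
            = (-1 : ℂ) ^ ((x jq : ℕ)) * ∏ i ∈ S3, (-1 : ℂ) ^ ((x i : ℕ)) := by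
          rw [h44, Finset.prod_insert hjqS3]
        rw [hP4]
        split_ifs with hev
        · linear_combination
            (-((-1 : ℂ) ^ ((x jp : ℕ)) * (-1 : ℂ) ^ ((x jq : ℕ)) *
              (zphase d ((jp : ℕ)) x * zphase d ((jq : ℕ)) x))) * Complex.I_sq
            + ((-1 : ℂ) ^ ((x jp : ℕ)) * (-1 : ℂ) ^ ((x jq : ℕ))) * hPZ x
            + ((-1 : ℂ) ^ ((x jp : ℕ)) * (-1 : ℂ) ^ ((x jq : ℕ))) * hP3
            + ((-1 : ℂ) ^ ((x jq : ℕ)) * ∏ i ∈ S3, (-1 : ℂ) ^ ((x i : ℕ)))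
              * neg_one_pow_sq ((x jp : ℕ))
        · ring
      have hnott : ¬ (S4 = ∅ ∨ S4 = univ) := by
        rintro (h | h)
        · rw [h] at hjqS4; exact absurd hjqS4 (Finset.notMem_empty _)
        · rw [h] at hjpS4; exact hjpS4 (Finset.mem_univ _)
      have hC : ¬ ((∃ j ∈ Finset.Icc 1 (d - 1), p = 2 * j ∧ q = 2 * j + 1) ∨
          (p = 1 ∧ q = 2 * d)) := by
        rintro (⟨j, hj, h1, h2⟩ | ⟨h1, h2⟩) <;> omega
      rw [main, if_neg hnott, if_neg hC, mul_zero]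

lemma psiE_norm (d : ℕ) (hd : 1 ≤ d) : qinner (psiE d) (psiE d) = (2 : ℂ) ^ (d - 1) := by
  have h := signSum d hd ∅
  rw [if_pos (Or.inl rfl)] at h
  rw [← h, qinner]
  refine Finset.sum_congr rfl fun x _ => ?_
  simp only [psiE, Finset.prod_empty, mul_one]
  split_ifs with hc <;> simp

lemma anticomm_mulVec (d p q : ℕ) (hp : 1 ≤ p) (hpq : p < q) (hq : q ≤ 2 * d)
    (v : (Fin d → Fin 2) → ℂ) :
    (majorana d q).mulVec ((majorana d p).mulVec v)
      = fun x => -(((majorana d p).mulVec ((majorana d q).mulVec v)) x) := by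
  have hd : 1 ≤ d := by omega
  have hkp : (p + 1) / 2 - 1 < d := by omega
  have hkq : (q + 1) / 2 - 1 < d := by omega
  set jp : Fin d := ⟨(p + 1) / 2 - 1, hkp⟩ with hjp_def
  set jq : Fin d := ⟨(q + 1) / 2 - 1, hkq⟩ with hjq_def
  have hvp : (jp : ℕ) = (p + 1) / 2 - 1 := rfl
  have hvq : (jq : ℕ) = (q + 1) / 2 - 1 := rfl
  have hmval1 : ∀ r : ℕ, r % 2 = 1 → ∀ a : Fin 2, mval r a = 1 := by
    intro r h a; rw [mval, if_pos h]
  have hmval0 : ∀ r : ℕ, ¬ (r % 2 = 1) → ∀ a : Fin 2,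
      mval r a = -Complex.I * (-1 : ℂ) ^ ((a : ℕ)) := by
    intro r h a; rw [mval, if_neg h]; fin_cases a <;> norm_num
  have hflippow : ∀ a : Fin 2, (-1 : ℂ) ^ (((1 - a : Fin 2) : ℕ)) = -(-1 : ℂ) ^ ((a : ℕ)) := by
    intro a; fin_cases a <;> norm_num
  simp only [majorana_mulVec d p jp rfl, majorana_mulVec d q jq rfl]
  funext x
  rcases eq_or_lt_of_le (show (jp : ℕ) ≤ (jq : ℕ) by omega) with heq | hlt
  · have hp1 : p % 2 = 1 := by omega
    have hq2 : ¬ (q % 2 = 1) := by omega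
    have hjj : jq = jp := by rw [hjp_def, hjq_def]; exact Fin.ext heq.symm
    simp only [hjj, flipAt_flipAt, flipAt_apply_self]
    rw [zphase_flipAt_ge ((p + 1) / 2 - 1) jp (by omega)]
    simp only [hmval1 p hp1, hmval0 q hq2, hflippow]
    ring
  · have hne : jq ≠ jp := by
      intro h; have := congrArg Fin.val h; omega
    simp only [flipAt_apply_ne jp jq _ hne, flipAt_apply_ne jq jp _ (Ne.symm hne),
      flipAt_comm jp jq (Ne.symm hne)]
    rw [zphase_flipAt_ge ((p + 1) / 2 - 1) jq (by omega),
      zphase_flipAt_lt ((q + 1) / 2 - 1) jp (by omega)]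
    ring

lemma part2 (d p q : ℕ) (hd : 1 ≤ d) (hp : 1 ≤ p) (hpq : p < q) (hq : q ≤ 2 * d) :
    qinner (psiE d) (((-Complex.I) • (majorana d p * majorana d q)).mulVec (psiE d)) =
      if (∃ j ∈ Finset.Icc 1 (d - 1), p = 2 * j ∧ q = 2 * j + 1) ∨ (p = 1 ∧ q = 2 * d)
        then (2 : ℂ) ^ (d - 1) else 0 := by
  rw [Matrix.smul_mulVec]
  have hsc : qinner (psiE d) ((-Complex.I) • ((majorana d p * majorana d q).mulVec (psiE d)))
      = (-Complex.I) * qinner (psiE d) ((majorana d p * majorana d q).mulVec (psiE d)) := by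
    rw [qinner, qinner, Finset.mul_sum]
    refine Finset.sum_congr rfl fun x _ => ?_
    simp only [Pi.smul_apply, smul_eq_mul]
    ring
  rw [hsc, Epq d p q hd hp hpq hq]
  split_ifs with h
  · rw [← mul_assoc, neg_mul, Complex.I_mul_I, neg_neg, one_mul]
  · rw [mul_zero]

lemma qinner_neg (d : ℕ) (φ w : (Fin d → Fin 2) → ℂ) :
    qinner φ (fun x => -(w x)) = -qinner φ w := by
  rw [qinner, qinner, ← Finset.sum_neg_distrib]
  exact Finset.sum_congr rfl fun x _ => by ring

lemma part3lt (d p q : ℕ) (hd : 1 ≤ d) (hp : 1 ≤ p) (hpq : p < q) (hq : q ≤ 2 * d) :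
    (-Complex.I / (2 * qinner (psiE d) (psiE d))) *
        qinner (psiE d)
          ((majorana d p * majorana d q - majorana d q * majorana d p).mulVec (psiE d)) =
      M0ent d p q := by
  have hnorm := psiE_norm d hd
  have hE := Epq d p q hd hp hpq hq
  rw [Matrix.sub_mulVec]
  have h1 : (majorana d q * majorana d p).mulVec (psiE d)
      = fun x => -(((majorana d p * majorana d q).mulVec (psiE d)) x) := by
    rw [← Matrix.mulVec_mulVec, ← Matrix.mulVec_mulVec]
    exact anticomm_mulVec d p q hp hpq hq (psiE d)
  have h2 : qinner (psiE d) ((majorana d p * majorana d q).mulVec (psiE d)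
        - (majorana d q * majorana d p).mulVec (psiE d))
      = 2 * qinner (psiE d) ((majorana d p * majorana d q).mulVec (psiE d)) := by
    rw [h1, qinner, qinner, Finset.mul_sum]
    refine Finset.sum_congr rfl fun x _ => ?_
    simp only [Pi.sub_apply]
    ring
  rw [h2, hE, hnorm]
  have h2d : (2 : ℂ) ^ (d - 1) ≠ 0 := pow_ne_zero _ two_ne_zero
  have hne : (2 : ℂ) * (2 : ℂ) ^ (d - 1) ≠ 0 := mul_ne_zero two_ne_zero h2d
  by_cases hC : (∃ j ∈ Finset.Icc 1 (d - 1), p = 2 * j ∧ q = 2 * j + 1) ∨ (p = 1 ∧ q = 2 * d)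
  · have hM : M0ent d p q = 1 := by
      rcases hC with ⟨j, hj, h1, h2⟩ | ⟨h1, h2⟩
      · rw [Finset.mem_Icc] at hj
        rw [M0ent, if_pos ⟨by omega, by omega⟩]
      · rw [M0ent, if_neg (by omega), if_neg (by omega), if_pos ⟨h1, h2⟩]
    rw [if_pos hC, hM, div_mul_eq_mul_div, div_eq_one_iff_eq hne]
    linear_combination (-2 * (2 : ℂ) ^ (d - 1)) * Complex.I_sq
  · have hM : M0ent d p q = 0 := by
      have c1 : ¬ (p % 2 = 0 ∧ q = p + 1) := fun hh =>
        hC (Or.inl ⟨p / 2, Finset.mem_Icc.mpr ⟨by omega, by omega⟩, by omega, by omega⟩)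
      have c3 : ¬ (p = 1 ∧ q = 2 * d) := fun hh => hC (Or.inr hh)
      rw [M0ent, if_neg c1, if_neg (by omega), if_neg c3, if_neg (by omega)]
    rw [if_neg hC, mul_zero, mul_zero, hM]

lemma M0anti (d p q : ℕ) (h1 : 1 ≤ q) (h2 : q < p) (h3 : p ≤ 2 * d) :
    -M0ent d q p = M0ent d p q := by
  rw [M0ent, M0ent]
  split_ifs <;> first | (exfalso; omega) | norm_num

lemma part3gt (d p q : ℕ) (hd : 1 ≤ d) (hq1 : 1 ≤ q) (hqp : q < p) (hp2 : p ≤ 2 * d) :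
    (-Complex.I / (2 * qinner (psiE d) (psiE d))) *
        qinner (psiE d)
          ((majorana d p * majorana d q - majorana d q * majorana d p).mulVec (psiE d)) =
      M0ent d p q := by
  rw [show majorana d p * majorana d q - majorana d q * majorana d p
      = -(majorana d q * majorana d p - majorana d p * majorana d q) from (neg_sub _ _).symm,
    Matrix.neg_mulVec]
  have hqn : qinner (psiE d)
      (-((majorana d q * majorana d p - majorana d p * majorana d q).mulVec (psiE d)))
      = -qinner (psiE d)
          ((majorana d q * majorana d p - majorana d p * majorana d q).mulVec (psiE d)) := by
    rw [qinner, qinner, ← Finset.sum_neg_distrib]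
    refine Finset.sum_congr rfl fun x _ => ?_
    simp only [Pi.neg_apply]
    ring
  rw [hqn, mul_neg, part3lt d q p hd hq1 hqp hp2]
  exact M0anti d p q hq1 hqp hp2

lemma part3eq (d p : ℕ) (hd : 1 ≤ d) :
    (-Complex.I / (2 * qinner (psiE d) (psiE d))) *
        qinner (psiE d)
          ((majorana d p * majorana d p - majorana d p * majorana d p).mulVec (psiE d)) =
      M0ent d p p := by
  rw [sub_self, Matrix.zero_mulVec]
  have h0 : qinner (psiE d) (0 : (Fin d → Fin 2) → ℂ) = 0 := by
    simp [qinner]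
  rw [h0, mul_zero, M0ent, if_neg (by omega), if_neg (by omega), if_neg (by omega),
    if_neg (by omega)]


end AuxJW

/-- The even state `ψ_e` has norm `⟨ψ_e,ψ_e⟩ = 2^{d−1}`; for `1 ≤ p < q ≤ 2d`
the expectation `⟨ψ_e, (−i) c_p c_q ψ_e⟩` equals `2^{d−1}` exactly when `(p,q) = (2j,2j+1)`
for some `1 ≤ j ≤ d−1` or `(p,q) = (1,2d)`, and `0` otherwise; equivalently, the covariance
matrix `M_{p,q} = (−i/(2⟨ψ_e,ψ_e⟩)) ⟨ψ_e, (c_p c_q − c_q c_p) ψ_e⟩` equals `M₀`. -/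
theorem psiE_covariance_matrix (d : ℕ) (hd : 1 ≤ d) :
    qinner (psiE d) (psiE d) = (2 : ℂ) ^ (d - 1) ∧
      (∀ p q : ℕ, 1 ≤ p → p < q → q ≤ 2 * d →
        qinner (psiE d) (((-Complex.I) • (majorana d p * majorana d q)).mulVec (psiE d)) =
          if (∃ j ∈ Finset.Icc 1 (d - 1), p = 2 * j ∧ q = 2 * j + 1) ∨ (p = 1 ∧ q = 2 * d)
            then (2 : ℂ) ^ (d - 1) else 0) ∧
      ∀ p q : ℕ, 1 ≤ p → p ≤ 2 * d → 1 ≤ q → q ≤ 2 * d →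
        (-Complex.I / (2 * qinner (psiE d) (psiE d))) *
            qinner (psiE d)
              ((majorana d p * majorana d q - majorana d q * majorana d p).mulVec (psiE d)) =
          M0ent d p q := by
  refine ⟨psiE_norm d hd, fun p q hp hpq hq => part2 d p q hd hp hpq hq,
    fun p q hp hp2 hq hq2 => ?_⟩
  rcases lt_trichotomy p q with h | h | h
  · exact part3lt d p q hd hp h hq2
  · subst h
    exact part3eq d p hd
  · exact part3gt d p q hd hq h hp2
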